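/- Let k* be a δ-tame degree sequence on n ≥ 2 vertices with canonical covariance matrix Q, and let A = Q_D^{-1} Q_off, where Q_D = diag(Q) and Q_off = Q − Q_D, so that a_ij = q_ij/q_ii for i ≠ j and a_ii = 0. Then every eigenvalue λ of A is real and satisfies −1 + ((n−2)/(n−1))·(δ/(1−δ))² ≤ λ ≤ 1; in particular, for n ≥ 3 every eigenvalue of A is strictly greater than −1. -/

import Mathlib

open Filter Finset Asymptotics

/-- A simple undirected graph on `n` labelled vertices, given by its adjacency
indicators `g i j ∈ {0,1}` (as `Bool`), symmetric and with no loops. -/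
abbrev LabGraph (n : ℕ) : Type :=
  {g : Fin n → Fin n → Bool // (∀ i j, g i j = g j i) ∧ ∀ i, g i i = false}

noncomputable section

/-- The degree `k_i(G) = Σ_{j ≠ i} g_ij(G)` of vertex `i` in the graph `G`. -/
def degSeq {n : ℕ} (G : LabGraph n) (i : Fin n) : ℕ :=
  ∑ j ∈ Finset.univ.filter (fun j => j ≠ i), if G.1 i j then 1 else 0

/-- Canonical connection probabilities `p*_ij = x_i x_j / (1 + x_i x_j)`. -/
def pStar {n : ℕ} (x : Fin n → ℝ) (i j : Fin n) : ℝ := x i * x j / (1 + x i * x j)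

/-- The parameters `x` realise the degree sequence `k` as canonical averages:
`Σ_{j ≠ i} p*_ij = k_i` for all `i`. -/
def fitsDegrees {n : ℕ} (x : Fin n → ℝ) (k : Fin n → ℕ) : Prop :=
  ∀ i, ∑ j ∈ Finset.univ.filter (fun j => j ≠ i), pStar x i j = (k i : ℝ)

/-- Canonical ensemble probability
`P_can(G) = Π_{i<j} p_ij^{g_ij(G)} (1-p_ij)^{1-g_ij(G)}`. -/
def Pcan {n : ℕ} (p : Fin n → Fin n → ℝ) (G : LabGraph n) : ℝ :=
  ∏ ij ∈ Finset.univ.filter (fun ij : Fin n × Fin n => ij.1 < ij.2),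
    if G.1 ij.1 ij.2 then p ij.1 ij.2 else 1 - p ij.1 ij.2

/-- `Ω_k`: the number of graphs with degree sequence `k`. -/
def numGraphs (n : ℕ) (k : Fin n → ℕ) : ℕ :=
  (Finset.univ.filter (fun G : LabGraph n => degSeq G = k)).card

/-- Microcanonical ensemble: uniform on the graphs with degree sequence `k`. -/
def Pmic {n : ℕ} (k : Fin n → ℕ) (G : LabGraph n) : ℝ :=
  if degSeq G = k then ((numGraphs n k : ℝ))⁻¹ else 0

/-- Relative entropy `S_n(P_mic | P_can) = Σ_G P_mic(G) log (P_mic(G)/P_can(G))`. -/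
def relEnt (n : ℕ) (k : Fin n → ℕ) (p : Fin n → Fin n → ℝ) : ℝ :=
  ∑ G : LabGraph n, Pmic k G * Real.log (Pmic k G / Pcan p G)

/-- `f̄_n = (1/(2n)) Σ_{i=1}^n log (k_i (n-1-k_i) / n)`. -/
def fbar (n : ℕ) (k : Fin n → ℕ) : ℝ :=
  (1 / (2 * (n : ℝ))) * ∑ i, Real.log ((k i : ℝ) * ((n : ℝ) - 1 - (k i : ℝ)) / (n : ℝ))

/-- The canonical covariance matrix `Q` of the degrees:
`q_ij = p_ij (1 - p_ij)` for `i ≠ j` and `q_ii = Σ_{l ≠ i} p_il (1 - p_il)`. -/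
def Qmat {n : ℕ} (p : Fin n → Fin n → ℝ) : Matrix (Fin n) (Fin n) ℝ :=
  Matrix.of fun i j =>
    if i = j then ∑ l ∈ Finset.univ.filter (fun l => l ≠ i), p i l * (1 - p i l)
    else p i j * (1 - p i j)

/-- δ-tameness: `δ ≤ p_ij ≤ 1 - δ` for all `i ≠ j`. -/
def deltaTame {n : ℕ} (δ : ℝ) (p : Fin n → Fin n → ℝ) : Prop :=
  ∀ i j : Fin n, i ≠ j → δ ≤ p i j ∧ p i j ≤ 1 - δ

/-- The matrix `A = Q_D⁻¹ Q_off`, with entries `a_ij = q_ij / q_ii` for `i ≠ j`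
and `a_ii = 0`. -/
def Amat {n : ℕ} (p : Fin n → Fin n → ℝ) : Matrix (Fin n) (Fin n) ℝ :=
  Matrix.of fun i j => if i = j then 0 else Qmat p i j / Qmat p i i

/-!
Write `W` for the off-diagonal part of `Q` and `d_i = q_ii = Σ_j W_ij`, so that `A = D⁻¹ W`.
An eigenvector `v` of `A` satisfies `W v = λ D v`, hence `v* W v = λ · v* D v`; the left side is
real because `W` is real symmetric and `v* D v > 0`, so `λ` is real. Viewing `ℂ` as a real inner
product space, `v* W v = Σ W_ij ⟪v_i, v_j⟫`, and
`Σ W_ij ‖v_i ∓ v_j‖² = 2 v* D v ∓ 2 v* W v ≥ 0` gives `-1 ≤ λ ≤ 1`. The lower bound improves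
because `W_ij ≥ m` off the diagonal and `Σ_{i,j} ‖v_i + v_j‖² ≥ 2 n Σ ‖v_i‖²`, which yields
`(1 + λ) v* D v ≥ m (n - 2) Σ ‖v_i‖²`, while `v* D v ≤ (n - 1) M Σ ‖v_i‖²` when `W_ij ≤ M`.
δ-tameness gives `m = δ (1 - δ)` and `M = 1/4`, and `4 δ (1 - δ) ≥ (δ / (1 - δ))²` for `δ ≤ 1/2`.
-/

open Matrix ComplexConjugate
open scoped RealInnerProductSpace

section

variable {ι : Type*} [Fintype ι]

theorem sum_sum_norm_add_sq {E : Type*} [NormedAddCommGroup E] [InnerProductSpace ℝ E]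
    (v : ι → E) :
    ∑ i, ∑ j, ‖v i + v j‖ ^ 2 = 2 * Fintype.card ι * ∑ i, ‖v i‖ ^ 2 + 2 * ‖∑ i, v i‖ ^ 2 := by
  simp_rw [norm_add_sq_real, Finset.sum_add_distrib, ← Finset.mul_sum, ← inner_sum, ← sum_inner,
    real_inner_self_eq_norm_sq, Finset.sum_const, Finset.card_univ, nsmul_eq_mul, ← Finset.mul_sum]
  ring

theorem sum_mul_norm_sq_pos {E : Type*} [NormedAddCommGroup E] {d : ι → ℝ} (hd : ∀ i, 0 < d i)
    {v : ι → E} (hv : v ≠ 0) : 0 < ∑ i, d i * ‖v i‖ ^ 2 := by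
  obtain ⟨i, hi⟩ := Function.ne_iff.mp hv
  exact Finset.sum_pos' (fun j _ => mul_nonneg (hd j).le (by positivity))
    ⟨i, Finset.mem_univ i, mul_pos (hd i) (pow_pos (norm_pos_iff.mpr hi) 2)⟩

end

namespace Matrix

variable {ι : Type*}

def offDiag {α : Type*} [Zero α] [DecidableEq ι] (A : Matrix ι ι α) : Matrix ι ι α :=
  of fun i j => if i = j then 0 else A i j

theorem IsSymm.offDiag {α : Type*} [Zero α] [DecidableEq ι] {A : Matrix ι ι α}
    (hA : A.IsSymm) : A.offDiag.IsSymm := by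
  ext i j
  simp only [Matrix.offDiag, transpose_apply, of_apply, eq_comm (a := j), hA.apply]

variable [Fintype ι]

theorem exists_mulVec_eq_smul_of_isRoot_charpoly {R : Type*} [CommRing R] [IsDomain R]
    [DecidableEq ι] {A : Matrix ι ι R} {μ : R} (h : A.charpoly.IsRoot μ) :
    ∃ v ≠ 0, A *ᵥ v = μ • v := by
  obtain ⟨v, hv, hAv⟩ := exists_mulVec_eq_zero_iff.mpr (A.eval_charpoly μ ▸ h.eq_zero)
  refine ⟨v, hv, ?_⟩
  rw [sub_mulVec, sub_eq_zero, scalar_apply] at hAv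
  rw [← hAv]
  ext i
  simp [mulVec_diagonal]

def transitionMatrix (W : Matrix ι ι ℝ) : Matrix ι ι ℝ :=
  of fun i j => W i j / ∑ l, W i l

section QuadraticForm

variable {E : Type*} [NormedAddCommGroup E] [InnerProductSpace ℝ E] {W : Matrix ι ι ℝ}

theorem IsSymm.sum_sum_mul_right (hW : W.IsSymm) (f : ι → ℝ) :
    ∑ i, ∑ j, W i j * f j = ∑ i, (∑ j, W i j) * f i := by
  rw [Finset.sum_comm]
  simp_rw [Finset.sum_mul, hW.apply]

theorem IsSymm.sum_sum_mul_inner_le (hW : W.IsSymm) (hW0 : ∀ i j, 0 ≤ W i j) (v : ι → E) :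
    ∑ i, ∑ j, W i j * ⟪v i, v j⟫ ≤ ∑ i, (∑ j, W i j) * ‖v i‖ ^ 2 := by
  have hsq : 0 ≤ ∑ i, ∑ j, W i j * ‖v i - v j‖ ^ 2 :=
    Finset.sum_nonneg fun i _ => Finset.sum_nonneg fun j _ => mul_nonneg (hW0 i j) (by positivity)
  have hexp : ∑ i, ∑ j, W i j * ‖v i - v j‖ ^ 2 =
      2 * ∑ i, (∑ j, W i j) * ‖v i‖ ^ 2 - 2 * ∑ i, ∑ j, W i j * ⟪v i, v j⟫ := by
    have hterm : ∀ i j, W i j * ‖v i - v j‖ ^ 2 =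
        W i j * ‖v i‖ ^ 2 + W i j * ‖v j‖ ^ 2 - 2 * (W i j * ⟪v i, v j⟫) := by
      intro i j
      rw [norm_sub_sq_real]
      ring
    simp only [hterm, Finset.sum_add_distrib, Finset.sum_sub_distrib, ← Finset.mul_sum,
      ← Finset.sum_mul, hW.sum_sum_mul_right fun j => ‖v j‖ ^ 2]
    ring
  linarith

theorem sum_sum_mul_ge_of_forall_ne_le (hW0 : ∀ i j, 0 ≤ W i j) {m : ℝ}
    (hWm : ∀ i j, i ≠ j → m ≤ W i j) {f : ι → ι → ℝ} (hf : ∀ i j, 0 ≤ f i j) :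
    m * (∑ i, ∑ j, f i j - ∑ i, f i i) ≤ ∑ i, ∑ j, W i j * f i j := by
  classical
  rw [← Finset.sum_sub_distrib, Finset.mul_sum]
  refine Finset.sum_le_sum fun i _ => ?_
  rw [← Finset.sum_erase_add _ _ (Finset.mem_univ i), add_sub_cancel_right, Finset.mul_sum]
  calc ∑ j ∈ Finset.univ.erase i, m * f i j
      ≤ ∑ j ∈ Finset.univ.erase i, W i j * f i j :=
        Finset.sum_le_sum fun j hj =>
          mul_le_mul_of_nonneg_right (hWm i j (Finset.ne_of_mem_erase hj).symm) (hf i j)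
    _ ≤ ∑ j, W i j * f i j :=
        Finset.sum_le_sum_of_subset_of_nonneg (Finset.erase_subset _ _) fun j _ _ =>
          mul_nonneg (hW0 i j) (hf i j)

theorem IsSymm.sum_sum_mul_inner_ge (hW : W.IsSymm) (hW0 : ∀ i j, 0 ≤ W i j)
    {m : ℝ} (hm : 0 ≤ m) (hWm : ∀ i j, i ≠ j → m ≤ W i j) (v : ι → E) :
    m * (Fintype.card ι - 2) * ∑ i, ‖v i‖ ^ 2 - ∑ i, (∑ j, W i j) * ‖v i‖ ^ 2 ≤
      ∑ i, ∑ j, W i j * ⟪v i, v j⟫ := by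
  have hexp : ∑ i, ∑ j, W i j * ‖v i + v j‖ ^ 2 =
      2 * ∑ i, (∑ j, W i j) * ‖v i‖ ^ 2 + 2 * ∑ i, ∑ j, W i j * ⟪v i, v j⟫ := by
    have hterm : ∀ i j, W i j * ‖v i + v j‖ ^ 2 =
        W i j * ‖v i‖ ^ 2 + W i j * ‖v j‖ ^ 2 + 2 * (W i j * ⟪v i, v j⟫) := by
      intro i j
      rw [norm_add_sq_real]
      ring
    simp only [hterm, Finset.sum_add_distrib, ← Finset.mul_sum, ← Finset.sum_mul,
      hW.sum_sum_mul_right fun j => ‖v j‖ ^ 2]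
    ring
  have hdiag : ∑ i, ‖v i + v i‖ ^ 2 = 4 * ∑ i, ‖v i‖ ^ 2 := by
    simp_rw [← two_smul ℝ, norm_smul, Finset.mul_sum]
    norm_num
    ring_nf
  have hoff := sum_sum_mul_ge_of_forall_ne_le hW0 hWm fun i j => sq_nonneg ‖v i + v j‖
  rw [sum_sum_norm_add_sq, hdiag, hexp] at hoff
  nlinarith [mul_nonneg hm (sq_nonneg ‖∑ i, v i‖)]

end QuadraticForm

theorem IsSymm.im_eq_zero_and_re_mul_eq_of_sum_mul_eq {W : Matrix ι ι ℝ} (hW : W.IsSymm)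
    {d : ι → ℝ} (hd : ∀ i, 0 < d i) {v : ι → ℂ} (hv : v ≠ 0) {μ : ℂ}
    (h : ∀ i, ∑ j, W i j * v j = μ * (d i * v i)) :
    μ.im = 0 ∧ μ.re * ∑ i, d i * ‖v i‖ ^ 2 = ∑ i, ∑ j, W i j * ⟪v i, v j⟫ := by
  set T := ∑ i, d i * ‖v i‖ ^ 2
  set H : ℂ := ∑ i, ∑ j, (W i j : ℂ) * (conj (v i) * v j)
  have hH : H = μ * T := by
    calc H = ∑ i, conj (v i) * ∑ j, W i j * v j := by
          simp_rw [H, Finset.mul_sum]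
          exact Finset.sum_congr rfl fun i _ => Finset.sum_congr rfl fun j _ => by ring
      _ = ∑ i, μ * (d i * ‖v i‖ ^ 2 : ℝ) := by
          refine Finset.sum_congr rfl fun i _ => ?_
          rw [h, Complex.ofReal_mul, Complex.ofReal_pow, ← Complex.conj_mul']
          ring
      _ = μ * T := by rw [← Finset.mul_sum, ← Complex.ofReal_sum]
  have hH_conj : conj H = H := by
    simp only [H, map_sum, map_mul, Complex.conj_ofReal, Complex.conj_conj]
    rw [Finset.sum_comm]
    simp_rw [hW.apply, mul_comm (v _)]
  have hH_re : H.re = ∑ i, ∑ j, W i j * ⟪v i, v j⟫ := by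
    simp only [H, Complex.re_sum, Complex.re_ofReal_mul, Complex.inner, mul_comm (conj _)]
  have hT : 0 < T := sum_mul_norm_sq_pos hd hv
  constructor
  · have him := congrArg Complex.im hH
    rw [Complex.conj_eq_iff_im.mp hH_conj, Complex.im_mul_ofReal] at him
    exact (mul_eq_zero.mp him.symm).resolve_right hT.ne'
  · rw [← hH_re, hH, Complex.re_mul_ofReal]

theorem transitionMatrix_sum_mul_eq {W : Matrix ι ι ℝ} (hd : ∀ i, ∑ j, W i j ≠ 0) {v : ι → ℂ}
    {μ : ℂ} (h : (transitionMatrix W).map (↑) *ᵥ v = μ • v) (i : ι) :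
    ∑ j, W i j * v j = μ * ((∑ j, W i j : ℝ) * v i) := by
  have hdi : ((∑ j, W i j : ℝ) : ℂ) ≠ 0 := by exact_mod_cast hd i
  have hrow : ∑ j, ((W i j / ∑ l, W i l : ℝ) : ℂ) * v j = μ * v i := congrFun h i
  calc ∑ j, W i j * v j = (∑ j, W i j : ℝ) * ∑ j, ((W i j / ∑ l, W i l : ℝ) : ℂ) * v j := by
        rw [Finset.mul_sum]
        refine Finset.sum_congr rfl fun j _ => ?_
        rw [Complex.ofReal_div]
        field_simp
    _ = μ * ((∑ j, W i j : ℝ) * v i) := by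
        rw [hrow]
        ring

theorem sum_apply_pos_of_forall_ne_pos [Nontrivial ι] {W : Matrix ι ι ℝ}
    (hW0 : ∀ i j, 0 ≤ W i j) (hWpos : ∀ i j, i ≠ j → 0 < W i j) (i : ι) : 0 < ∑ j, W i j := by
  obtain ⟨j, hj⟩ := exists_ne i
  exact (hWpos i j hj.symm).trans_le (Finset.single_le_sum (fun j _ => hW0 i j) (Finset.mem_univ j))

theorem sum_apply_le_of_apply_self_eq_zero {W : Matrix ι ι ℝ} {i : ι} (hdiag : W i i = 0)
    {M : ℝ} (hWM : ∀ j, i ≠ j → W i j ≤ M) : ∑ j, W i j ≤ (Fintype.card ι - 1) * M := by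
  classical
  rw [← Finset.sum_erase _ hdiag]
  calc ∑ j ∈ Finset.univ.erase i, W i j ≤ ∑ j ∈ Finset.univ.erase i, M :=
        Finset.sum_le_sum fun j hj => hWM j (Finset.ne_of_mem_erase hj).symm
    _ = (Fintype.card ι - 1) * M := by
        rw [Finset.sum_const, Finset.card_erase_of_mem (Finset.mem_univ i), Finset.card_univ,
          nsmul_eq_mul, Nat.cast_pred (Fintype.card_pos_iff.mpr ⟨i⟩)]

theorem transitionMatrix_eigenvalue_bounds [DecidableEq ι] [Nontrivial ι] {W : Matrix ι ι ℝ}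
    (hW : W.IsSymm) (hdiag : ∀ i, W i i = 0) {m M : ℝ} (hm : 0 < m)
    (hWm : ∀ i j, i ≠ j → m ≤ W i j) (hWM : ∀ i j, i ≠ j → W i j ≤ M) {μ : ℂ}
    (hμ : ((transitionMatrix W).map (↑)).charpoly.IsRoot μ) :
    μ.im = 0 ∧
      -1 + (Fintype.card ι - 2) / (Fintype.card ι - 1) * (m / M) ≤ μ.re ∧ μ.re ≤ 1 := by
  have hn : (2 : ℝ) ≤ Fintype.card ι := by exact_mod_cast Fintype.one_lt_card (α := ι)
  set n : ℝ := (Fintype.card ι : ℝ)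
  have hW0 : ∀ i j, 0 ≤ W i j := fun i j => by
    rcases eq_or_ne i j with rfl | hij
    · exact (hdiag i).ge
    · exact hm.le.trans (hWm i j hij)
  have hd_pos := sum_apply_pos_of_forall_ne_pos hW0 fun i j hij => hm.trans_le (hWm i j hij)
  have hd_le : ∀ i, ∑ j, W i j ≤ (n - 1) * M := fun i =>
    sum_apply_le_of_apply_self_eq_zero (hdiag i) (hWM i)
  obtain ⟨v, hv, hAv⟩ := exists_mulVec_eq_smul_of_isRoot_charpoly hμ
  obtain ⟨him, hre⟩ := hW.im_eq_zero_and_re_mul_eq_of_sum_mul_eq hd_pos hv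
    (transitionMatrix_sum_mul_eq (fun i => (hd_pos i).ne') hAv)
  set S := ∑ i, ‖v i‖ ^ 2
  set T := ∑ i, (∑ j, W i j) * ‖v i‖ ^ 2
  have hT : 0 < T := sum_mul_norm_sq_pos hd_pos hv
  have hTS : T ≤ (n - 1) * M * S := by
    rw [Finset.mul_sum]
    exact Finset.sum_le_sum fun i _ => mul_le_mul_of_nonneg_right (hd_le i) (sq_nonneg _)
  have hupper := hW.sum_sum_mul_inner_le hW0 v
  have hlower := hW.sum_sum_mul_inner_ge hW0 hm.le hWm v
  refine ⟨him, ?_, ?_⟩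
  · obtain ⟨i, j, hij⟩ := exists_pair_ne ι
    have hM : 0 < M := hm.trans_le ((hWm i j hij).trans (hWM i j hij))
    have hc : (n - 2) / (n - 1) * (m / M) * T ≤ (μ.re + 1) * T := by
      calc (n - 2) / (n - 1) * (m / M) * T ≤ (n - 2) / (n - 1) * (m / M) * ((n - 1) * M * S) :=
            mul_le_mul_of_nonneg_left hTS
              (mul_nonneg (div_nonneg (by linarith) (by linarith)) (div_pos hm hM).le)
        _ = m * (n - 2) * S := by
            have : n - 1 ≠ 0 := by linarith
            field_simp
        _ ≤ (μ.re + 1) * T := by linarith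
    linarith [le_of_mul_le_mul_right hc hT]
  · exact le_of_mul_le_mul_right (by linarith) hT

end Matrix

theorem pStar_comm {n : ℕ} (x : Fin n → ℝ) (i j : Fin n) : pStar x i j = pStar x j i := by
  simp only [pStar, mul_comm (x i)]

theorem Qmat_isSymm {n : ℕ} {p : Fin n → Fin n → ℝ} (hp : ∀ i j, p i j = p j i) :
    (Qmat p).IsSymm := by
  ext i j
  rcases eq_or_ne i j with rfl | hij
  · rfl
  · simp [Qmat, hij, hij.symm, hp i j]

theorem offDiag_Qmat_apply_of_ne {n : ℕ} (p : Fin n → Fin n → ℝ) {i j : Fin n} (hij : i ≠ j) :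
    (Qmat p).offDiag i j = p i j * (1 - p i j) := by
  simp [Matrix.offDiag, Qmat, hij]

theorem Amat_eq_transitionMatrix {n : ℕ} (p : Fin n → Fin n → ℝ) :
    Amat p = (Qmat p).offDiag.transitionMatrix := by
  ext i j
  simp only [Amat, Matrix.transitionMatrix, Matrix.offDiag, Matrix.of_apply]
  split_ifs with hij
  · simp
  · congr 1
    simp only [Qmat, Matrix.of_apply, if_true, Finset.sum_filter]
    refine Finset.sum_congr rfl fun l _ => ?_
    rcases eq_or_ne i l with rfl | hil
    · simp
    · simp [hil, hil.symm]

theorem div_one_sub_sq_le {δ : ℝ} (hδ0 : 0 < δ) (hδhalf : δ ≤ 1 / 2) :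
    (δ / (1 - δ)) ^ 2 ≤ δ * (1 - δ) / (1 / 4) := by
  have h1δ : 0 < 1 - δ := by linarith
  have hcube : δ / 4 ≤ (1 - δ) ^ 3 :=
    calc δ / 4 ≤ (1 / 2) ^ 3 := by linarith
      _ ≤ (1 - δ) ^ 3 := pow_le_pow_left₀ (by norm_num) (by linarith) 3
  rw [div_pow, div_le_div_iff₀ (by positivity) (by norm_num)]
  nlinarith [mul_le_mul_of_nonneg_left hcube hδ0.le]

theorem tame_A_eigenvalue_bounds_general
    (n : ℕ) (hn : 2 ≤ n)
    (δ : ℝ) (hδ0 : 0 < δ) (hδhalf : δ ≤ 1 / 2)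
    (x : Fin n → ℝ)
    (htame : deltaTame δ (pStar x)) :
    ∀ μ : ℂ, (((Amat (pStar x)).map (fun r : ℝ => (r : ℂ))).charpoly).IsRoot μ →
      μ.im = 0 ∧
      (-1 + (((n : ℝ) - 2) / ((n : ℝ) - 1)) * (δ / (1 - δ)) ^ 2 ≤ μ.re ∧ μ.re ≤ 1) ∧
      (3 ≤ n → -1 < μ.re) := by
  intro μ hμ
  have : Nontrivial (Fin n) := Fin.nontrivial_iff_two_le.mpr hn
  rw [Amat_eq_transitionMatrix] at hμ
  have hW : ∀ i j, i ≠ j →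
      δ * (1 - δ) ≤ (Qmat (pStar x)).offDiag i j ∧ (Qmat (pStar x)).offDiag i j ≤ 1 / 4 := by
    intro i j hij
    obtain ⟨hlo, hhi⟩ := htame i j hij
    rw [offDiag_Qmat_apply_of_ne _ hij]
    constructor <;> nlinarith [sq_nonneg (1 - 2 * pStar x i j)]
  obtain ⟨him, hlower, hupper⟩ := Matrix.transitionMatrix_eigenvalue_bounds
    (Qmat_isSymm (pStar_comm x)).offDiag (fun i => if_pos rfl) (mul_pos hδ0 (by linarith))
    (fun i j hij => (hW i j hij).1) (fun i j hij => (hW i j hij).2) hμ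
  rw [Fintype.card_fin] at hlower
  have hn2 : (2 : ℝ) ≤ n := by exact_mod_cast hn
  have hratio := mul_le_mul_of_nonneg_left (div_one_sub_sq_le hδ0 hδhalf)
    (div_nonneg (by linarith : (0 : ℝ) ≤ n - 2) (by linarith : (0 : ℝ) ≤ n - 1))
  refine ⟨him, ⟨by linarith, hupper⟩, fun hn3 => ?_⟩
  have hn3' : (3 : ℝ) ≤ n := by exact_mod_cast hn3
  have : 0 < ((n : ℝ) - 2) / (n - 1) * (δ / (1 - δ)) ^ 2 :=
    mul_pos (div_pos (by linarith) (by linarith)) (pow_pos (div_pos hδ0 (by linarith)) 2)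
  linarith

/-- every eigenvalue `λ` of `A = Q_D⁻¹ Q_off` is real and satisfies
`-1 + ((n-2)/(n-1)) (δ/(1-δ))² ≤ λ ≤ 1`; in particular, for `n ≥ 3` every
eigenvalue of `A` is strictly greater than `-1`. -/
theorem tame_A_eigenvalue_bounds
    (n : ℕ) (hn : 2 ≤ n)
    (δ : ℝ) (hδ0 : 0 < δ) (hδhalf : δ ≤ 1 / 2)
    (k : Fin n → ℕ) (x : Fin n → ℝ)
    (hxpos : ∀ i, 0 < x i)
    (hfit : fitsDegrees x k)
    (htame : deltaTame δ (pStar x)) :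
    ∀ μ : ℂ, (((Amat (pStar x)).map (fun r : ℝ => (r : ℂ))).charpoly).IsRoot μ →
      μ.im = 0 ∧
      (-1 + (((n : ℝ) - 2) / ((n : ℝ) - 1)) * (δ / (1 - δ)) ^ 2 ≤ μ.re ∧ μ.re ≤ 1) ∧
      (3 ≤ n → -1 < μ.re) :=
  tame_A_eigenvalue_bounds_general n hn δ hδ0 hδhalf x htame
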